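/- In a type-based two-strategy count game, suppose a : Fin N → Bool is a Nash equilibrium and ā : Fin N → Bool is a profile such that #{i : ā i = true} = #{i : a i = true} and, for every player i, there exists a player j with τ(j) = τ(i) and a(j) = ā(i) (i.e., every (type, strategy) pair occupied in ā is already occupied in a). Then ā is also a Nash equilibrium. -/

import Mathlib

/-- Number of players choosing strategy `s` in profile `a`. -/
def muCount {N : ℕ} (a : Fin N → Bool) (s : Bool) : ℕ :=
  (Finset.univ.filter fun j => a j = s).card

/-- Nash equilibrium of a type-based two-strategy count game: `P t s m` is the payoff
of a type-`t` player choosing strategy `s` when `m` players in total (including itself)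
choose `s`; no player can strictly improve by unilaterally switching strategy. -/
def isNE {N T : ℕ} (τ : Fin N → Fin T) (P : Fin T → Bool → ℕ → ℝ)
    (a : Fin N → Bool) : Prop :=
  ∀ i : Fin N, P (τ i) (!(a i)) (muCount a (!(a i)) + 1) ≤ P (τ i) (a i) (muCount a (a i))

theorem muCount_false_add_muCount_true {N : ℕ} (b : Fin N → Bool) :
    muCount b false + muCount b true = N := by
  have h := Finset.card_filter_add_card_filter_not (s := Finset.univ) (fun j => b j = true)
  simp only [Bool.not_eq_true, Finset.card_univ, Fintype.card_fin] at h
  unfold muCount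
  omega

theorem muCount_eq_of_muCount_true_eq {N : ℕ} {a b : Fin N → Bool}
    (h : muCount b true = muCount a true) (s : Bool) : muCount b s = muCount a s := by
  cases s
  · have hb := muCount_false_add_muCount_true b
    have ha := muCount_false_add_muCount_true a
    omega
  · exact h

/-- In a type-based two-strategy count game, if `a` is a Nash
equilibrium and `ā` is a profile with the same number of players choosing `true` such
that every (type, strategy) pair occupied in `ā` is already occupied in `a`
(for every player `i` there is a player `j` with `τ j = τ i` and `a j = ā i`),
then `ā` is also a Nash equilibrium. -/
theorem stmt7 (N T : ℕ) (τ : Fin N → Fin T) (P : Fin T → Bool → ℕ → ℝ)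
    (a abar : Fin N → Bool) (ha : isNE τ P a)
    (hcount : muCount abar true = muCount a true)
    (hocc : ∀ i : Fin N, ∃ j : Fin N, τ j = τ i ∧ a j = abar i) :
    isNE τ P abar := by
  intro i
  obtain ⟨j, hτ, hj⟩ := hocc i
  rw [muCount_eq_of_muCount_true_eq hcount, muCount_eq_of_muCount_true_eq hcount, ← hτ, ← hj]
  exact ha j
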